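/- arXiv:1610.09601 — 2 statements merged into one kernel-verified Lean document; each statement's English description precedes it below -/
import Mathlib

section
/- For all n ≥ 2, t ≥ 0, and v, ξ ∈ ℝ^n: |e^{-tL}(v·ξ)² − |v|²|ξ|²/n| ≤ e^{-t}(1 − 1/n)|v|²|ξ|². -/
open Real

/-- `e^{-tL}(v·ξ)²`, given by its explicit formula. -/
noncomputable def kacQuad (n : ℕ) (t : ℝ) (v ξ : Fin n → ℝ) : ℝ :=
  (1 - Real.exp (-((n:ℝ) / ((n:ℝ) - 1)) * t)) * (∑ i, (v i)^2) * (∑ i, (ξ i)^2) / n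
  + Real.exp (-((n:ℝ) / ((n:ℝ) - 1)) * t) * ∑ i, (ξ i)^2 * (v i)^2
  + Real.exp (-((4 * (n:ℝ) - 6) / ((n:ℝ) - 1)) * t) *
      ∑ i : Fin n, ∑ j : Fin n, if i ≠ j then ξ i * ξ j * v i * v j else 0

lemma auxStmt3 (e e1 e2 u r A P2 : ℝ) (h21 : e2 ≤ e1) (h1e : e1 ≤ e)
    (he2 : 0 < e2) (hA0 : 0 ≤ A) (hA : A ≤ u) (hP0 : 0 ≤ P2) (hP : P2 ≤ u)
    (hu : 0 ≤ u) (hr0 : 0 < r) (hr : r ≤ 1 - r) :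
    |e1 * (A - u * r) + e2 * (P2 - A)| ≤ e * (1 - r) * u := by
  rw [abs_le]
  constructor
  · nlinarith [mul_nonneg (sub_nonneg.2 h21) hA0, mul_nonneg he2.le hP0,
      mul_nonneg (sub_nonneg.2 h1e) (mul_nonneg hu hr0.le),
      mul_nonneg (mul_nonneg (le_trans he2.le (le_trans h21 h1e)) hu) (by linarith : (0:ℝ) ≤ 1 - r - r)]
  · nlinarith [mul_nonneg (sub_nonneg.2 h21) (sub_nonneg.2 hA), mul_nonneg he2.le (sub_nonneg.2 hP),
      mul_nonneg (sub_nonneg.2 h1e) (mul_nonneg (by linarith : (0:ℝ) ≤ 1 - r) hu)]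

/-- For all `n ≥ 2`, `t ≥ 0`, `v, ξ ∈ ℝⁿ`:
`|e^{-tL}(v·ξ)² − |v|²|ξ|²/n| ≤ e^{-t}(1 − 1/n)|v|²|ξ|²`. -/
theorem stmt3 (n : ℕ) (hn : 2 ≤ n) (t : ℝ) (ht : 0 ≤ t) (v ξ : Fin n → ℝ) :
    |kacQuad n t v ξ - (∑ i, (v i)^2) * (∑ i, (ξ i)^2) / n|
      ≤ Real.exp (-t) * (1 - 1 / (n:ℝ)) * (∑ i, (v i)^2) * (∑ i, (ξ i)^2) := by
  set N : ℝ := (n : ℝ) with hNdef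
  have hN : (2 : ℝ) ≤ N := by rw [hNdef]; exact_mod_cast hn
  have hN0 : (0 : ℝ) < N := by linarith
  have hN1 : (0 : ℝ) < N - 1 := by linarith
  set S : ℝ := ∑ i, (v i)^2 with hSdef
  set T : ℝ := ∑ i, (ξ i)^2 with hTdef
  set A : ℝ := ∑ i, (ξ i)^2 * (v i)^2 with hAdef
  set P : ℝ := ∑ i, ξ i * v i with hPdef
  set B : ℝ := ∑ i : Fin n, ∑ j : Fin n, if i ≠ j then ξ i * ξ j * v i * v j else 0 with hBdef
  -- basic facts
  have hS0 : 0 ≤ S := Finset.sum_nonneg fun i _ => sq_nonneg _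
  have hT0 : 0 ≤ T := Finset.sum_nonneg fun i _ => sq_nonneg _
  have hA0 : 0 ≤ A := Finset.sum_nonneg fun i _ => mul_nonneg (sq_nonneg _) (sq_nonneg _)
  have hAST : A ≤ S * T := by
    have hST : S * T = ∑ i, ∑ j, (v i)^2 * (ξ j)^2 := Finset.sum_mul_sum _ _ _ _
    rw [hST]
    apply Finset.sum_le_sum
    intro i _
    have h : (v i)^2 * (ξ i)^2 ≤ ∑ j, (v i)^2 * (ξ j)^2 :=
      Finset.single_le_sum (f := fun j => (v i)^2 * (ξ j)^2)
        (fun j _ => mul_nonneg (sq_nonneg _) (sq_nonneg _)) (Finset.mem_univ i)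
    have he : (ξ i)^2 * (v i)^2 = (v i)^2 * (ξ i)^2 := by ring
    linarith
  have hPST : P^2 ≤ S * T := by
    have h := Finset.sum_mul_sq_le_sq_mul_sq Finset.univ (fun i => ξ i) (fun i => v i)
    have h2 : P ^ 2 ≤ T * S := by simpa [hPdef, hTdef, hSdef] using h
    linarith
  have hP0 : 0 ≤ P^2 := sq_nonneg _
  -- B = P^2 - A
  have hrow : ∀ i : Fin n, (∑ j, if i ≠ j then ξ i * ξ j * v i * v j else 0)
      = (∑ j, (ξ i * v i) * (ξ j * v j)) - (ξ i)^2 * (v i)^2 := by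
    intro i
    have hterm : ∀ j, (if i ≠ j then ξ i * ξ j * v i * v j else 0)
        = (ξ i * v i) * (ξ j * v j) - (if i = j then (ξ i * v i) * (ξ j * v j) else 0) := by
      intro j
      by_cases h : i = j
      · subst h; simp
      · simp [h]; ring
    rw [Finset.sum_congr rfl (fun j _ => hterm j), Finset.sum_sub_distrib]
    simp [Finset.sum_ite_eq]
    try ring
  have hB : B = P^2 - A := by
    rw [hBdef, Finset.sum_congr rfl (fun i _ => hrow i), Finset.sum_sub_distrib]
    have hPP : P^2 = ∑ i, ∑ j, (ξ i * v i) * (ξ j * v j) := by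
      rw [hPdef, sq, Finset.sum_mul_sum]
    rw [← hPP, ← hAdef]
  -- exponentials
  set e1 : ℝ := Real.exp (-(N / (N - 1)) * t) with he1def
  set e2 : ℝ := Real.exp (-((4 * N - 6) / (N - 1)) * t) with he2def
  set e : ℝ := Real.exp (-t) with hedef
  have he1pos : 0 < e1 := Real.exp_pos _
  have he2pos : 0 < e2 := Real.exp_pos _
  have h21 : e2 ≤ e1 := by
    apply Real.exp_le_exp.2
    have hba : N / (N - 1) ≤ (4 * N - 6) / (N - 1) :=
      (div_le_div_iff_of_pos_right hN1).2 (by linarith)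
    nlinarith [mul_nonneg (sub_nonneg.2 hba) ht]
  have h1e : e1 ≤ e := by
    apply Real.exp_le_exp.2
    have hb : 1 ≤ N / (N - 1) := by
      rw [le_div_iff₀ hN1]; linarith
    nlinarith [mul_nonneg (sub_nonneg.2 hb) ht]
  -- 1/N facts
  have hr0 : 0 < 1 / N := by positivity
  have hr2 : 1 / N ≤ 1 / 2 := by
    apply one_div_le_one_div_of_le <;> linarith
  have hninv : 1 / N ≤ 1 - 1 / N := by linarith
  -- rewrite the goal
  have hkey : kacQuad n t v ξ - S * T / N = e1 * (A - S * T / N) + e2 * (P^2 - A) := by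
    rw [kacQuad, ← hSdef, ← hTdef, ← hAdef, ← hBdef, ← he1def, ← he2def, ← hNdef, hB]
    ring
  rw [hkey]
  have hST0 : 0 ≤ S * T := mul_nonneg hS0 hT0
  have hg1 : e1 * (A - S * T / N) + e2 * (P^2 - A)
      = e1 * (A - (S * T) * (1 / N)) + e2 * (P^2 - A) := by ring
  have hg2 : e * (1 - 1 / N) * S * T = e * (1 - 1 / N) * (S * T) := by ring
  rw [hg1, hg2]
  exact auxStmt3 e e1 e2 (S * T) (1 / N) A (P^2) h21 h1e he2pos hA0 hAST hP0 hPST hST0 hr0 hninv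
end

section
/- Let φ(ξ) = ∏_{i=1}^n (1 − e^{-α ξ_i²}) on ℝ^n and z_1 = (r, 0, …, 0) with r > 0. Then for any composition of at most n−2 Kac rotation-averaging operators Q_{i,j} (each averaging over a uniform angle), the resulting function vanishes at z_1: [Q_{i_k,j_k} ∘ ⋯ ∘ Q_{i_1,j_1} φ](z_1) = 0 whenever k ≤ n − 2. -/
open MeasureTheory Real

noncomputable def kacRotate (n : ℕ) (i j : Fin n) (θ : ℝ) (v : Fin n → ℝ) : Fin n → ℝ :=
  fun k => if k = i then v i * Real.cos θ - v j * Real.sin θ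
           else if k = j then v i * Real.sin θ + v j * Real.cos θ
           else v k

noncomputable def Qij (n : ℕ) (i j : Fin n) (f : (Fin n → ℝ) → ℝ) (v : Fin n → ℝ) : ℝ :=
  (2 * Real.pi)⁻¹ * ∫ θ in (0:ℝ)..(2 * Real.pi), f (kacRotate n i j θ v)

/-- Iterated application of the rotation-averaging operators along a list of pairs:
`iterQ [p_k, …, p_1] f = Q_{p_k} (… (Q_{p_1} f))`. -/
noncomputable def iterQ (n : ℕ) : List (Fin n × Fin n) → ((Fin n → ℝ) → ℝ) → (Fin n → ℝ) → ℝ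
  | [], f => f
  | p :: l, f => Qij n p.1 p.2 (iterQ n l f)

lemma iterQ_vanish (n : ℕ) (α : ℝ) (l : List (Fin n × Fin n)) :
    ∀ (S : Finset (Fin n)) (v : Fin n → ℝ),
      (∀ i ∉ S, v i = 0) → S.card + l.length < n →
      iterQ n l (fun ξ => ∏ i, (1 - Real.exp (-α * (ξ i)^2))) v = 0 := by
  induction l with
  | nil =>
    intro S v hv hcard
    simp only [List.length_nil, Nat.add_zero] at hcard
    have hS : Sᶜ.Nonempty := by
      rw [← Finset.card_pos, Finset.card_compl, Fintype.card_fin]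
      omega
    obtain ⟨i, hi'⟩ := hS
    have hi : i ∉ S := Finset.mem_compl.mp hi'
    simp only [iterQ]
    apply Finset.prod_eq_zero (Finset.mem_univ i)
    rw [hv i hi]
    norm_num
  | cons p l ih =>
    intro S v hv hcard
    simp only [List.length_cons] at hcard
    simp only [iterQ, Qij]
    have hint : ∀ θ ∈ Set.uIcc (0:ℝ) (2 * Real.pi),
        iterQ n l (fun ξ => ∏ i, (1 - Real.exp (-α * (ξ i)^2)))
          (kacRotate n p.1 p.2 θ v) = 0 := by
      intro θ _
      by_cases hmem : p.1 ∈ S ∨ p.2 ∈ S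
      · apply ih (insert p.1 (insert p.2 S))
        · intro i hi
          simp only [Finset.mem_insert, not_or] at hi
          obtain ⟨h1, h2, h3⟩ := hi
          simp only [kacRotate, if_neg h1, if_neg h2]
          exact hv i h3
        · have hcard' : (insert p.1 (insert p.2 S)).card ≤ S.card + 1 := by
            rcases hmem with h | h
            · have : insert p.1 (insert p.2 S) = insert p.2 S := by
                apply Finset.insert_eq_self.mpr
                exact Finset.mem_insert_of_mem h
              rw [this]
              exact Finset.card_insert_le _ _
            · have : insert p.2 S = S := Finset.insert_eq_self.mpr h
              rw [this]
              exact Finset.card_insert_le _ _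
          omega
      · push_neg at hmem
        apply ih S
        · intro i hi
          simp only [kacRotate]
          by_cases h1 : i = p.1
          · rw [if_pos h1, hv p.1 hmem.1, hv p.2 hmem.2]; ring
          · rw [if_neg h1]
            by_cases h2 : i = p.2
            · rw [if_pos h2, hv p.1 hmem.1, hv p.2 hmem.2]; ring
            · rw [if_neg h2]; exact hv i hi
        · omega
    rw [intervalIntegral.integral_congr hint]
    simp

/-- With `φ(ξ) = ∏ (1 − e^{-α ξ_i²})` and `z₁ = (r, 0, …, 0)`, any composition of at
most `n − 2` Kac rotation-averaging operators applied to `φ` vanishes at `z₁`. -/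
theorem stmt11 (n : ℕ) (hn : 2 ≤ n) (α r : ℝ) (hα : 0 < α) (hr : 0 < r)
    (l : List (Fin n × Fin n)) (hl : l.length ≤ n - 2)
    (hpairs : ∀ p ∈ l, p.1 ≠ p.2) :
    iterQ n l (fun ξ => ∏ i, (1 - Real.exp (-α * (ξ i)^2)))
      (fun i => if (i : ℕ) = 0 then r else 0) = 0 := by
  apply iterQ_vanish n α l {(⟨0, by omega⟩ : Fin n)}
  · intro i hi
    simp only [Finset.mem_singleton] at hi
    have : (i : ℕ) ≠ 0 := by
      intro h
      exact hi (Fin.ext h)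
    simp [this]
  · have : Finset.card {(⟨0, by omega⟩ : Fin n)} = 1 := Finset.card_singleton _
    omega
end
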